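/- arXiv:2108.13417 — 8 statements merged into one kernel-verified Lean document; each statement's English description precedes it below -/
import Mathlib

section
/- Let G be a connected simple graph on a finite vertex set V and let φ be a permutation voltage assignment in S_k on G. Then the following are equivalent: (1) the derived graph G^φ is connected; (2) for every vertex v ∈ V and every pair i, j ∈ {1,…,k}, there exists a closed walk W of G starting at v such that i = φ(W)(j); (3) there exists a vertex v ∈ V such that for every pair i, j ∈ {1,…,k} there is a closed walk W of G starting at v with i = φ(W)(j). -/
open SimpleGraph

/-- A permutation voltage assignment `φ` in `S_k` on a simple graph `G` assigns a permutation
to each ordered pair of adjacent vertices, with reversed pairs receiving inverse permutations. -/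
def VoltageCompat {V : Type*} {k : ℕ} (G : SimpleGraph V) (φ : V → V → Equiv.Perm (Fin k)) :
    Prop :=
  ∀ u v : V, G.Adj u v → φ v u = (φ u v)⁻¹

/-- The derived graph `G^φ` on `V × {1,…,k}`: `(u,i)` is adjacent to `(v,j)` iff
`u` is adjacent to `v` in `G` and `i = φ(u,v)(j)`. -/
def derivedGraph {V : Type*} {k : ℕ} (G : SimpleGraph V) (φ : V → V → Equiv.Perm (Fin k)) :
    SimpleGraph (V × Fin k) :=
  SimpleGraph.fromRel (fun p q => G.Adj p.1 q.1 ∧ p.2 = φ p.1 q.1 q.2)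

/-- The voltage `φ(W) = φ(v₀,v₁)φ(v₁,v₂)⋯φ(v_{t−1},v_t)` of a walk `W = v₀v₁⋯v_t`. -/
def walkVoltage {V : Type*} {k : ℕ} {G : SimpleGraph V}
    (φ : V → V → Equiv.Perm (Fin k)) {u v : V} (W : G.Walk u v) : Equiv.Perm (Fin k) :=
  (W.darts.map (fun d => φ d.fst d.snd)).prod

lemma walkVoltage_nil {V : Type*} {k : ℕ} {G : SimpleGraph V}
    (φ : V → V → Equiv.Perm (Fin k)) {u : V} :
    walkVoltage φ (Walk.nil : G.Walk u u) = 1 := rfl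

lemma walkVoltage_cons {V : Type*} {k : ℕ} {G : SimpleGraph V}
    (φ : V → V → Equiv.Perm (Fin k)) {u w v : V} (h : G.Adj u w) (W : G.Walk w v) :
    walkVoltage φ (Walk.cons h W) = φ u w * walkVoltage φ W := by
  simp [walkVoltage, Walk.darts_cons]

lemma derived_adj_elim {V : Type*} {k : ℕ} {G : SimpleGraph V}
    {φ : V → V → Equiv.Perm (Fin k)} (hφ : VoltageCompat G φ)
    {p q : V × Fin k} (h : (derivedGraph G φ).Adj p q) :
    G.Adj p.1 q.1 ∧ p.2 = φ p.1 q.1 q.2 := by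
  obtain ⟨hne, h | h⟩ := h
  · exact h
  · refine ⟨h.1.symm, ?_⟩
    rw [hφ _ _ h.1, h.2]
    simp

lemma derived_adj_intro {V : Type*} {k : ℕ} {G : SimpleGraph V}
    (φ : V → V → Equiv.Perm (Fin k))
    {u v : V} (h : G.Adj u v) (j : Fin k) :
    (derivedGraph G φ).Adj (u, φ u v j) (v, j) := by
  refine ⟨?_, Or.inl ⟨h, rfl⟩⟩
  intro he
  exact h.ne (congrArg Prod.fst he)

lemma reach_lift {V : Type*} {k : ℕ} {G : SimpleGraph V}
    (φ : V → V → Equiv.Perm (Fin k)) :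
    ∀ {u v : V} (W : G.Walk u v) (j : Fin k),
    (derivedGraph G φ).Reachable (u, walkVoltage φ W j) (v, j) := by
  intro u v W
  induction W with
  | @nil w =>
    intro j
    have : walkVoltage φ (Walk.nil : G.Walk w w) j = j := by
      rw [walkVoltage_nil]; rfl
    rw [this]
  | @cons u w v h W ih =>
    intro j
    have hv : walkVoltage φ (Walk.cons h W) j = φ u w (walkVoltage φ W j) := by
      rw [walkVoltage_cons]; rfl
    rw [hv]
    exact (derived_adj_intro φ h (walkVoltage φ W j)).reachable.trans (ih j)

lemma proj_walk {V : Type*} {k : ℕ} {G : SimpleGraph V}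
    {φ : V → V → Equiv.Perm (Fin k)} (hφ : VoltageCompat G φ) :
    ∀ {p q : V × Fin k} (_ : (derivedGraph G φ).Walk p q),
    ∃ W : G.Walk p.1 q.1, p.2 = walkVoltage φ W q.2 := by
  intro p q W'
  induction W' with
  | nil => exact ⟨Walk.nil, by simp [walkVoltage_nil]⟩
  | @cons p m q h W' ih =>
    obtain ⟨ha, he⟩ := derived_adj_elim hφ h
    obtain ⟨W, hW⟩ := ih
    refine ⟨Walk.cons ha W, ?_⟩
    rw [walkVoltage_cons, he, hW]
    rfl

theorem stmt_0 {V : Type*} [Fintype V] {k : ℕ} (hk : 0 < k)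
    (G : SimpleGraph V) (hG : G.Connected)
    (φ : V → V → Equiv.Perm (Fin k)) (hφ : VoltageCompat G φ) :
    List.TFAE [
      (derivedGraph G φ).Connected,
      ∀ (v : V) (i j : Fin k), ∃ W : G.Walk v v, i = walkVoltage φ W j,
      ∃ v : V, ∀ i j : Fin k, ∃ W : G.Walk v v, i = walkVoltage φ W j ] := by
  have hVne : Nonempty V := hG.nonempty
  have hkne : Nonempty (Fin k) := ⟨⟨0, hk⟩⟩
  tfae_have 1 → 2 := by
    intro hc v i j
    obtain ⟨W'⟩ := hc.preconnected (v, i) (v, j)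
    exact proj_walk hφ W'
  tfae_have 2 → 3 := by
    intro h
    obtain ⟨v⟩ := hVne
    exact ⟨v, h v⟩
  tfae_have 3 → 1 := by
    rintro ⟨v, hv⟩
    refine ⟨fun p q => ?_⟩
    -- enough: every vertex reachable from (v, i0) for a fixed i0
    obtain ⟨i0⟩ := hkne
    have key : ∀ p : V × Fin k, (derivedGraph G φ).Reachable (v, i0) p := by
      rintro ⟨u, j⟩
      obtain ⟨W⟩ := hG.preconnected v u
      have h1 : (derivedGraph G φ).Reachable (v, walkVoltage φ W j) (u, j) :=
        reach_lift φ W j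
      obtain ⟨C, hC⟩ := hv (walkVoltage φ W j) i0
      have h0 : (derivedGraph G φ).Reachable (v, walkVoltage φ C i0) (v, i0) :=
        reach_lift φ C i0
      rw [← hC] at h0
      exact h0.symm.trans h1
    exact (key p).symm.trans (key q)
  tfae_finish
end

section
/- Let H be a connected m-uniform hypergraph on a finite vertex set V with edge set E, let H̄ be an m-uniform hypergraph on a finite vertex set V̄ with edge set Ē, and let ϖ : V̄ → V be a covering projection such that |ϖ⁻¹(v)| = k for every v ∈ V (a k-fold covering). Then there exists a permutation voltage assignment φ in S_k on the incidence graph B_H such that the derived hypergraph H_B^φ is isomorphic to H̄, i.e., there is a bijection f : V × {1,…,k} → V̄ such that a subset of V × {1,…,k} is an edge of H_B^φ if and only if its image under f is an edge of H̄. -/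
open SimpleGraph Finset

/-- The "adjacency" simple graph of a hypergraph with edge set `E`: two distinct vertices
are adjacent iff they lie in a common edge.  The hypergraph is connected iff this graph is. -/
def hypAdj {V : Type*} (E : Finset (Finset V)) : SimpleGraph V :=
  SimpleGraph.fromRel (fun u v => ∃ e ∈ E, u ∈ e ∧ v ∈ e)

/-- The edge set of the derived hypergraph `H_B^φ` of a hypergraph with edge set `E` and a
permutation voltage assignment `φ` in `S_k` on the incidence graph: for `e ∈ E` and
`j ∈ {1,…,k}`, the edge `(e,j)` is the set `{(u, φ(u,e)(j)) : u ∈ e}`. -/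
def derivedEdges {V : Type*} [DecidableEq V] {k : ℕ}
    (E : Finset (Finset V)) (φ : V → Finset V → Equiv.Perm (Fin k)) :
    Finset (Finset (V × Fin k)) :=
  (E ×ˢ (Finset.univ : Finset (Fin k))).image
    (fun p => p.1.image (fun u => (u, φ u p.1 p.2)))

theorem stmt_8 {V V' : Type*} [Fintype V] [DecidableEq V] [Fintype V'] [DecidableEq V']
    {m k : ℕ} (hm : 2 ≤ m) (hk : 0 < k)
    (E : Finset (Finset V)) (hunif : ∀ e ∈ E, e.card = m)
    (hconn : (hypAdj E).Connected)
    (E' : Finset (Finset V')) (hunif' : ∀ e ∈ E', e.card = m)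
    (ϖ : V' → V)
    (hhom : ∀ e ∈ E', Set.InjOn ϖ ↑e ∧ e.image ϖ ∈ E)
    (hsurj : Function.Surjective ϖ)
    (hlocal : ∀ v' : V', Set.BijOn (fun e : Finset V' => e.image ϖ)
        {e : Finset V' | e ∈ E' ∧ v' ∈ e} {e : Finset V | e ∈ E ∧ ϖ v' ∈ e})
    (hfold : ∀ v : V, Nat.card {v' : V' // ϖ v' = v} = k) :
    ∃ (φ : V → Finset V → Equiv.Perm (Fin k)) (f : (V × Fin k) ≃ V'),
      ∀ S : Finset (V × Fin k), S ∈ derivedEdges E φ ↔ S.image f ∈ E' := by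
  classical
  -- bijections from Fin k to each fiber
  have lam : ∀ v : V, Fin k ≃ {v' // ϖ v' = v} := fun v =>
    (Fintype.equivFinOfCardEq (by rw [← Nat.card_eq_fintype_card]; exact hfold v)).symm
  -- uniqueness of lifts of an edge through a given fiber vertex
  have lift_uniq : ∀ (v' : V') (e : Finset V) (y z : Finset V'),
      y ∈ E' → v' ∈ y → y.image ϖ = e → z ∈ E' → v' ∈ z → z.image ϖ = e → y = z := by
    intro v' e y z hy hvy hyim hz hvz hzim
    exact (hlocal v').injOn (Set.mem_setOf.mpr ⟨hy, hvy⟩) (Set.mem_setOf.mpr ⟨hz, hvz⟩)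
      (by rw [hyim, hzim])
  -- uniqueness of vertices over a given base vertex inside an edge of E'
  have vert_uniq : ∀ (e' : Finset V'), e' ∈ E' → ∀ y z, y ∈ e' → z ∈ e' → ϖ y = ϖ z → y = z := by
    intro e' he' y z hy hz h
    exact (hhom e' he').1 hy hz h
  -- edges are nonempty
  have hne : ∀ e ∈ E, e.Nonempty := fun e he =>
    Finset.card_pos.mp (by rw [hunif e he]; omega)
  choose v0 hv0 using hne
  -- the selected vertex over an element of an edge of E'
  have vert_ex : ∀ (e' : Finset V') (u : V), e' ∈ E' → u ∈ e'.image ϖ →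
      ∃ w, w ∈ e' ∧ ϖ w = u := by
    intro e' u _ hu
    obtain ⟨w, hw, hwu⟩ := Finset.mem_image.mp hu
    exact ⟨w, hw, hwu⟩
  choose W hW1 hW2 using vert_ex
  -- the lifted edge through the j-th fiber vertex over the base point of e
  have mu_ex : ∀ (e : Finset V) (he : e ∈ E) (j : Fin k),
      ∃ e', e' ∈ E' ∧ ((lam (v0 e he)) j).1 ∈ e' ∧ e'.image ϖ = e := by
    intro e he j
    obtain ⟨e', he', him⟩ := (hlocal ((lam (v0 e he)) j).1).surjOn
      (show e ∈ {e_1 : Finset V | e_1 ∈ E ∧ ϖ ((lam (v0 e he)) j).1 ∈ e_1} from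
        ⟨he, by rw [((lam (v0 e he)) j).2]; exact hv0 e he⟩)
    exact ⟨e', he'.1, he'.2, him⟩
  choose mu hmu1 hmu2 hmu3 using mu_ex
  -- the bijection F : V × Fin k → V'
  obtain ⟨F, hFval⟩ : ∃ F : V × Fin k → V', ∀ u i, F (u, i) = ((lam u) i).1 :=
    ⟨fun p => ((lam p.1) p.2).1, fun _ _ => rfl⟩
  have hFfib : ∀ p : V × Fin k, ϖ (F p) = p.1 := by
    rintro ⟨u, i⟩
    rw [hFval]
    exact ((lam u) i).2
  have hFinj : Function.Injective F := by
    rintro ⟨u, i⟩ ⟨u', i'⟩ h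
    have h1 : u = u' := by
      have := hFfib (u, i)
      have h2 := hFfib (u', i')
      simp only at this h2
      rw [← this, ← h2, h]
    subst h1
    rw [hFval, hFval] at h
    simp only [Prod.mk.injEq]
    exact ⟨trivial, (lam u).injective (Subtype.ext h)⟩
  have hFsurj : Function.Surjective F := by
    intro v'
    refine ⟨(ϖ v', (lam (ϖ v')).symm ⟨v', rfl⟩), ?_⟩
    rw [hFval, Equiv.apply_symm_apply]
  -- the voltage permutation data
  obtain ⟨g, hgmem⟩ : ∃ g : ∀ (u : V) (e : Finset V), e ∈ E → u ∈ e → Fin k → Fin k,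
      ∀ u e (he : e ∈ E) (hu : u ∈ e) (j : Fin k), F (u, g u e he hu j) ∈ mu e he j := by
    refine ⟨fun u e he hu j => (lam u).symm
      ⟨W (mu e he j) u (hmu1 e he j) (by rw [hmu3 e he j]; exact hu), hW2 _ _ _ _⟩, ?_⟩
    intro u e he hu j
    rw [hFval, Equiv.apply_symm_apply]
    exact hW1 _ _ _ _
  have hginj : ∀ u e (he : e ∈ E) (hu : u ∈ e), Function.Injective (g u e he hu) := by
    intro u e he hu j j' h
    have hmueq : mu e he j = mu e he j' :=
      lift_uniq (F (u, g u e he hu j)) e _ _ (hmu1 e he j) (hgmem u e he hu j) (hmu3 e he j)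
        (hmu1 e he j') (by rw [h]; exact hgmem u e he hu j') (hmu3 e he j')
    have hv : ((lam (v0 e he)) j).1 = ((lam (v0 e he)) j').1 := by
      apply vert_uniq (mu e he j') (hmu1 e he j')
      · rw [← hmueq]; exact hmu2 e he j
      · exact hmu2 e he j'
      · rw [((lam (v0 e he)) j).2, ((lam (v0 e he)) j').2]
    exact (lam (v0 e he)).injective (Subtype.ext hv)
  obtain ⟨phi, hphi⟩ : ∃ phi : V → Finset V → Equiv.Perm (Fin k),
      ∀ u e (he : e ∈ E) (hu : u ∈ e) (j : Fin k), phi u e j = g u e he hu j := by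
    refine ⟨fun u e => if h : e ∈ E ∧ u ∈ e then
      Equiv.ofBijective (g u e h.1 h.2) (Finite.injective_iff_bijective.mp (hginj u e h.1 h.2))
      else 1, ?_⟩
    intro u e he hu j
    simp only [dif_pos (show e ∈ E ∧ u ∈ e from ⟨he, hu⟩)]
    rfl
  -- image of the derived edge (e, j) under F is mu e he j
  have himg : ∀ (e : Finset V) (he : e ∈ E) (j : Fin k),
      (e.image (fun u => (u, phi u e j))).image F = mu e he j := by
    intro e he j
    apply Finset.Subset.antisymm
    · intro x hx
      simp only [Finset.mem_image] at hx
      obtain ⟨p, ⟨u, hu, rfl⟩, rfl⟩ := hx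
      rw [hphi u e he hu j]
      exact hgmem u e he hu j
    · intro w hw
      have hwϖ : ϖ w ∈ e := by
        rw [← hmu3 e he j]; exact Finset.mem_image_of_mem _ hw
      have h1 : F (ϖ w, phi (ϖ w) e j) ∈ mu e he j := by
        rw [hphi _ _ he hwϖ j]; exact hgmem _ _ he hwϖ j
      have h2 : F (ϖ w, phi (ϖ w) e j) = w := by
        apply vert_uniq (mu e he j) (hmu1 e he j) _ w h1 hw
        rw [hFfib]
      rw [← h2]
      exact Finset.mem_image_of_mem F (Finset.mem_image_of_mem _ hwϖ)
  refine ⟨phi, Equiv.ofBijective F ⟨hFinj, hFsurj⟩, ?_⟩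
  have hcoe : ⇑(Equiv.ofBijective F ⟨hFinj, hFsurj⟩) = F := rfl
  intro S
  rw [hcoe]
  constructor
  · intro hS
    rw [derivedEdges, Finset.mem_image] at hS
    obtain ⟨⟨e, j⟩, hp, rfl⟩ := hS
    rw [Finset.mem_product] at hp
    rw [himg e hp.1 j]
    exact hmu1 e hp.1 j
  · intro hS
    have he : (S.image F).image ϖ ∈ E := (hhom _ hS).2
    have hv0e : v0 ((S.image F).image ϖ) he ∈ (S.image F).image ϖ := hv0 _ he
    set w := W (S.image F) (v0 ((S.image F).image ϖ) he) hS hv0e with hwdef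
    have hw1 : w ∈ S.image F := hW1 _ _ _ _
    have hw2 : ϖ w = v0 ((S.image F).image ϖ) he := hW2 _ _ _ _
    set j := (lam (v0 ((S.image F).image ϖ) he)).symm ⟨w, hw2⟩ with hjdef
    have hlamj : (lam (v0 ((S.image F).image ϖ) he)) j = ⟨w, hw2⟩ := by
      rw [hjdef, Equiv.apply_symm_apply]
    have hmu : mu ((S.image F).image ϖ) he j = S.image F := by
      apply lift_uniq (((lam (v0 ((S.image F).image ϖ) he)) j).1) ((S.image F).image ϖ) _ _
        (hmu1 _ he j) (hmu2 _ he j) (hmu3 _ he j) hS ?_ rfl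
      rw [hlamj]
      exact hw1
    have hSim : S.image F =
        (((S.image F).image ϖ).image (fun u => (u, phi u ((S.image F).image ϖ) j))).image F := by
      rw [himg _ he j, hmu]
    have hSeq : S = ((S.image F).image ϖ).image (fun u => (u, phi u ((S.image F).image ϖ) j)) :=
      Finset.image_injective hFinj hSim
    rw [derivedEdges, Finset.mem_image]
    exact ⟨((S.image F).image ϖ, j), by rw [Finset.mem_product]; exact ⟨he, Finset.mem_univ _⟩,
      hSeq.symm⟩
end

section
/- Let H be a connected m-uniform hypergraph on a finite vertex set V, and let H_B^φ be the k-fold covering of H derived from a permutation voltage assignment φ in S_k on the incidence graph B_H. Then every eigenvalue of H is an eigenvalue of H_B^φ: if λ ∈ ℂ admits a nonzero x : V → ℂ with Σ_{e ∈ E, v ∈ e} Π_{u ∈ e∖{v}} x(u) = λ·x(v)^{m−1} for all v ∈ V, then the lift y : V × {1,…,k} → ℂ defined by y(v,i) = x(v) is a nonzero vector satisfying the corresponding eigenvalue equations for H_B^φ with the same λ. -/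
open SimpleGraph Finset

theorem stmt_11 {V : Type*} [Fintype V] [DecidableEq V] {m k : ℕ} (hm : 2 ≤ m) (hk : 0 < k)
    (E : Finset (Finset V)) (hunif : ∀ e ∈ E, e.card = m)
    (hconn : (hypAdj E).Connected)
    (φ : V → Finset V → Equiv.Perm (Fin k))
    (lam : ℂ) (x : V → ℂ) (hx : x ≠ 0)
    (heig : ∀ v : V,
      ∑ e ∈ E.filter (fun e => v ∈ e), ∏ u ∈ e.erase v, x u = lam * x v ^ (m - 1)) :
    (fun p : V × Fin k => x p.1) ≠ 0 ∧
      ∀ p : V × Fin k,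
        ∑ f ∈ (derivedEdges E φ).filter (fun f => p ∈ f),
            ∏ u ∈ f.erase p, (fun q : V × Fin k => x q.1) u
          = lam * (fun q : V × Fin k => x q.1) p ^ (m - 1) := by
  constructor
  · intro h
    apply hx
    funext v
    have := congrFun h (v, ⟨0, hk⟩)
    simpa using this
  · rintro ⟨v, i⟩
    -- the map sending an ordinary edge to its lifted edge through (v,i)
    set g : Finset V → V → V × Fin k := fun e u => (u, φ u e ((φ v e)⁻¹ i)) with hg
    have hginj : ∀ e, Function.Injective (g e) := by
      intro e u₁ u₂ h
      exact congrArg Prod.fst h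
    have hS : (derivedEdges E φ).filter (fun f => (v, i) ∈ f)
        = (E.filter (fun e => v ∈ e)).image (fun e => e.image (g e)) := by
      ext f
      simp only [derivedEdges, Finset.mem_filter, Finset.mem_image, Finset.mem_product,
        Finset.mem_univ, and_true]
      constructor
      · rintro ⟨⟨⟨e, j⟩, he, rfl⟩, hmem⟩
        simp only [Finset.mem_image] at hmem
        obtain ⟨u, hu, huv⟩ := hmem
        have h1 : u = v := congrArg Prod.fst huv
        subst h1
        have h2 : φ u e j = i := congrArg Prod.snd huv
        refine ⟨e, ⟨he, hu⟩, ?_⟩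
        have : (φ u e)⁻¹ i = j := by
          rw [← h2]; exact Equiv.symm_apply_apply _ _
        simp only [g, this]
      · rintro ⟨e, ⟨he, hv⟩, rfl⟩
        refine ⟨⟨⟨e, (φ v e)⁻¹ i⟩, he, rfl⟩, ?_⟩
        refine Finset.mem_image.2 ⟨v, hv, ?_⟩
        simp [g]
    rw [hS, Finset.sum_image ?hinj]
    case hinj =>
      intro e₁ h₁ e₂ h₂ h
      have := congrArg (Finset.image Prod.fst) h
      simpa [Finset.image_image, Function.comp_def, g] using this
    have key : ∀ e ∈ E.filter (fun e => v ∈ e),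
        ∏ u ∈ (e.image (g e)).erase (v, i), x u.1 = ∏ u ∈ e.erase v, x u := by
      intro e he
      have hv : (v, i) = g e v := by simp [g]
      rw [hv, ← Finset.image_erase (hginj e), Finset.prod_image
        (fun a _ b _ h => hginj e h)]
    rw [Finset.sum_congr rfl key]
    simpa using heig v
end

section
/- Let H be a connected m-uniform hypergraph on a finite vertex set V, and let H_B^φ be the k-fold covering of H derived from a permutation voltage assignment φ in S_k on the incidence graph B_H. Then the spectral radii of H and H_B^φ coincide: the supremum of |λ| over all eigenvalues λ of H_B^φ equals the supremum of |λ| over all eigenvalues λ of H. -/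
open SimpleGraph Finset

/-- `lam` is an eigenvalue of (the adjacency tensor of) the `m`-uniform hypergraph with
vertex set `W` and edge set `F`. -/
def IsHypEigenvalue {W : Type*} [Fintype W] [DecidableEq W]
    (m : ℕ) (F : Finset (Finset W)) (lam : ℂ) : Prop :=
  ∃ x : W → ℂ, x ≠ 0 ∧ ∀ w : W,
    ∑ f ∈ F.filter (fun f => w ∈ f), ∏ u ∈ f.erase w, x u = lam * x w ^ (m - 1)

set_option linter.unusedSectionVars false
set_option linter.unnecessarySimpa false
set_option maxHeartbeats 1000000

namespace Stmt12T

variable {V : Type*} [Fintype V] [DecidableEq V] {m k : ℕ}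

theorem walk_boundary {G : SimpleGraph V} {p : V → Prop} :
    ∀ {a b : V}, G.Walk a b → p a → ¬ p b → ∃ u v, G.Adj u v ∧ p u ∧ ¬ p v
  | _, _, SimpleGraph.Walk.nil, ha, hb => absurd ha hb
  | _, _, @SimpleGraph.Walk.cons _ _ a c b h q, ha, hb => by
    by_cases hc : p c
    · exact walk_boundary q hc hb
    · exact ⟨a, c, h, ha, hc⟩

def AwF (E : Finset (Finset V)) (x : V → ℝ) (v : V) : ℝ :=
  ∑ e ∈ E.filter (fun e => v ∈ e), ∏ u ∈ e.erase v, x u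

def hypF (E : Finset (Finset V)) (x : V → ℝ) : ℝ := ∑ e ∈ E, ∏ u ∈ e, x u

variable {m : ℕ}

theorem pairing_eq (E : Finset (Finset V)) (hunif : ∀ e ∈ E, e.card = m) (x : V → ℝ) :
    ∑ v, x v * AwF E x v = m * hypF E x := by
  have h1 : ∀ v, x v * AwF E x v = ∑ e ∈ E, if v ∈ e then ∏ u ∈ e, x u else 0 := by
    intro v
    rw [AwF, sum_filter, mul_sum]
    refine sum_congr rfl fun e _ => ?_
    split_ifs with h
    · rw [Finset.mul_prod_erase e x h]
    · rw [mul_zero]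
  calc ∑ v, x v * AwF E x v = ∑ v, ∑ e ∈ E, if v ∈ e then ∏ u ∈ e, x u else 0 :=
        sum_congr rfl fun v _ => h1 v
    _ = ∑ e ∈ E, ∑ v, if v ∈ e then ∏ u ∈ e, x u else 0 := Finset.sum_comm
    _ = ∑ e ∈ E, (m : ℝ) * ∏ u ∈ e, x u := by
        refine sum_congr rfl fun e he => ?_
        rw [Finset.sum_ite_mem, Finset.univ_inter, Finset.sum_const, nsmul_eq_mul, hunif e he]
    _ = m * hypF E x := by rw [hypF, mul_sum]

theorem pairing_le (hm : m ≠ 0) (E : Finset (Finset V)) (hunif : ∀ e ∈ E, e.card = m)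
    {μ : ℝ} {x : V → ℝ} (hx : ∀ v, 0 ≤ x v)
    (h : ∀ v, μ * x v ^ (m - 1) ≤ AwF E x v) :
    μ * ∑ v, x v ^ m ≤ m * hypF E x := by
  have hm1 : m - 1 + 1 = m := Nat.succ_pred_eq_of_pos (Nat.pos_of_ne_zero hm)
  have hxp : ∀ v : V, x v ^ m = x v ^ (m - 1) * x v := fun v => by
    conv_lhs => rw [← hm1, pow_succ]
  calc μ * ∑ v, x v ^ m = ∑ v, (μ * x v ^ (m - 1)) * x v := by
        rw [mul_sum]
        refine sum_congr rfl fun v _ => ?_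
        rw [hxp v]; ring
    _ ≤ ∑ v, AwF E x v * x v :=
        sum_le_sum fun v _ => mul_le_mul_of_nonneg_right (h v) (hx v)
    _ = ∑ v, x v * AwF E x v := sum_congr rfl fun v _ => mul_comm _ _
    _ = m * hypF E x := pairing_eq E hunif x

theorem hypF_smul (E : Finset (Finset V)) (hunif : ∀ e ∈ E, e.card = m) (c : ℝ) (x : V → ℝ) :
    hypF E (fun v => c * x v) = c ^ m * hypF E x := by
  rw [hypF, hypF, mul_sum]
  refine sum_congr rfl fun e he => ?_
  rw [Finset.prod_mul_distrib, Finset.prod_const, hunif e he]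


theorem pf (hm : 2 ≤ m) [Nonempty V] (E : Finset (Finset V)) (hunif : ∀ e ∈ E, e.card = m)
    (hconn : (hypAdj E).Connected) :
    ∃ ρ : ℝ, 0 ≤ ρ ∧
      (∀ x : V → ℝ, (∀ v, 0 ≤ x v) → (m : ℝ) * hypF E x ≤ ρ * ∑ v, x v ^ m) ∧
      ∃ xr : V → ℝ, xr ≠ 0 ∧ ∀ v, AwF E xr v = ρ * xr v ^ (m - 1) := by
  classical
  have hmn0 : m ≠ 0 := by omega
  have hm0 : (m : ℝ) ≠ 0 := Nat.cast_ne_zero.mpr hmn0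
  have hmpos : (0 : ℝ) < m := by positivity
  rcases eq_or_ne E ∅ with rfl | hEne
  · refine ⟨0, le_refl _, ?_, fun _ => 1, ?_, ?_⟩
    · intro x hx; simp [hypF]
    · intro h
      have := congrFun h (Classical.arbitrary V)
      simpa using this
    · intro v; simp [AwF]
  -- main case
  set S : Set (V → ℝ) := {x | (∀ v, 0 ≤ x v) ∧ ∑ v, x v ^ m = 1} with hSdef
  have hclosed : IsClosed S := by
    have h1 : IsClosed {x : V → ℝ | ∀ v, 0 ≤ x v} := by
      have : {x : V → ℝ | ∀ v, 0 ≤ x v} = ⋂ v, {x : V → ℝ | 0 ≤ x v} := by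
        ext x; simp [Set.mem_iInter]
      rw [this]
      exact isClosed_iInter fun v => isClosed_le continuous_const (continuous_apply v)
    have h2 : IsClosed {x : V → ℝ | ∑ v, x v ^ m = 1} :=
      isClosed_eq (continuous_finset_sum _ fun v _ => (continuous_apply v).pow m)
        continuous_const
    exact h1.inter h2
  have hbounded : Bornology.IsBounded S := by
    refine (Metric.isBounded_closedBall (x := (0 : V → ℝ)) (r := 1)).subset ?_
    rintro x ⟨hx0, hx1⟩
    rw [Metric.mem_closedBall, dist_zero_right]
    refine (pi_norm_le_iff_of_nonneg zero_le_one).2 fun v => ?_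
    rw [Real.norm_eq_abs, abs_of_nonneg (hx0 v)]
    have hle : x v ^ m ≤ 1 := by
      rw [← hx1]
      exact single_le_sum (fun i _ => pow_nonneg (hx0 i) m) (mem_univ v)
    exact (pow_le_one_iff_of_nonneg (hx0 v) hmn0).1 hle
  have hScomp : IsCompact S := Metric.isCompact_of_isClosed_isBounded hclosed hbounded
  have hone1 : ∀ v, 0 ≤ (Pi.single (Classical.arbitrary V) (1:ℝ) : V → ℝ) v := by
    intro v; rw [Pi.single_apply]; split_ifs <;> norm_num
  have hone2 : ∑ v, ((Pi.single (Classical.arbitrary V) (1:ℝ) : V → ℝ)) v ^ m = 1 := by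
    have h : ∀ v, ((Pi.single (Classical.arbitrary V) (1:ℝ) : V → ℝ)) v ^ m
        = if v = Classical.arbitrary V then 1 else 0 := fun v => by
      rw [Pi.single_apply]; split_ifs <;> simp [zero_pow hmn0]
    rw [Finset.sum_congr rfl fun v _ => h v, Finset.sum_ite_eq' univ _ (fun _ => (1:ℝ))]
    simp
  have hSne : S.Nonempty := ⟨_, hone1, hone2⟩
  have hgcont : ContinuousOn (fun x : V → ℝ => (m : ℝ) * hypF E x) S :=
    (continuous_const.mul (continuous_finset_sum _ fun e _ =>
      continuous_finset_prod _ fun u _ => continuous_apply u)).continuousOn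
  obtain ⟨x₀, hx₀S, hx₀max⟩ := hScomp.exists_isMaxOn hSne hgcont
  have hx₀0 : ∀ v, 0 ≤ x₀ v := hx₀S.1
  have hx₀1 : ∑ v, x₀ v ^ m = 1 := hx₀S.2
  set ρ : ℝ := (m : ℝ) * hypF E x₀ with hρdef
  have hρ0 : 0 ≤ ρ :=
    mul_nonneg (by positivity) (sum_nonneg fun e _ => prod_nonneg fun u _ => hx₀0 u)
  have hbound : ∀ x : V → ℝ, (∀ v, 0 ≤ x v) → (m : ℝ) * hypF E x ≤ ρ * ∑ v, x v ^ m := by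
    intro x hx
    have hs0 : 0 ≤ ∑ v, x v ^ m := sum_nonneg fun v _ => pow_nonneg (hx v) m
    rcases eq_or_lt_of_le hs0 with hz | hp
    · have hx0 : ∀ v, x v = 0 := by
        intro v
        have h := (sum_eq_zero_iff_of_nonneg (fun v _ => pow_nonneg (hx v) m)).1 hz.symm v
          (mem_univ v)
        exact pow_eq_zero_iff hmn0 |>.1 h
      have hf0 : hypF E x = 0 := by
        refine sum_eq_zero fun e he => ?_
        obtain ⟨u, hu⟩ : e.Nonempty := card_pos.1 (by rw [hunif e he]; omega)
        exact prod_eq_zero hu (hx0 u)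
      rw [hf0, ← hz]; simp
    · set s : ℝ := ∑ v, x v ^ m with hs
      set c : ℝ := (1 / s) ^ ((m : ℝ)⁻¹) with hc
      have hc0 : 0 ≤ c := Real.rpow_nonneg (by positivity) _
      have hcm : c ^ m = 1 / s := by
        rw [hc, ← Real.rpow_natCast ((1 / s) ^ ((m : ℝ)⁻¹)) m, ← Real.rpow_mul (by positivity),
          inv_mul_cancel₀ hm0, Real.rpow_one]
      have hmem : (fun v => c * x v) ∈ S := by
        refine ⟨fun v => mul_nonneg hc0 (hx v), ?_⟩
        have h1 : ∑ v, (c * x v) ^ m = c ^ m * s := by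
          rw [hs, mul_sum]; exact sum_congr rfl fun v _ => mul_pow _ _ _
        rw [h1, hcm]
        field_simp
      have hmax : (m : ℝ) * hypF E (fun v => c * x v) ≤ (m : ℝ) * hypF E x₀ := hx₀max hmem
      rw [hypF_smul E hunif c x, hcm] at hmax
      have h2 : (m : ℝ) * hypF E x = ((m : ℝ) * (1 / s * hypF E x)) * s := by
        field_simp
      rw [h2]
      exact mul_le_mul_of_nonneg_right hmax hs0

  -- full support
  have hpos : ∀ v, 0 < x₀ v := by
    by_contra hneg
    push_neg at hneg
    obtain ⟨w, hw⟩ := hneg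
    have hw0 : x₀ w = 0 := le_antisymm hw (hx₀0 w)
    obtain ⟨vp, hvp⟩ : ∃ v, x₀ v ≠ 0 := by
      by_contra hall; push_neg at hall
      have : ∑ v, x₀ v ^ m = 0 := sum_eq_zero fun v _ => by rw [hall v]; exact zero_pow hmn0
      rw [this] at hx₀1; norm_num at hx₀1
    obtain ⟨u1, u2, hadj, hu1, hu2⟩ :=
      walk_boundary (p := fun v => x₀ v ≠ 0) ((hconn vp w).some) hvp (by simp [hw0])
    rw [hypAdj, fromRel_adj] at hadj
    obtain ⟨hne, hrel⟩ := hadj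
    obtain ⟨e, heE, hu1e, hu2e⟩ : ∃ e ∈ E, u1 ∈ e ∧ u2 ∈ e := by
      rcases hrel with ⟨e, he, h1, h2⟩ | ⟨e, he, h1, h2⟩
      exacts [⟨e, he, h1, h2⟩, ⟨e, he, h2, h1⟩]
    have hu2z : x₀ u2 = 0 := not_not.mp hu2
    set Z : Finset V := e.filter (fun u => x₀ u = 0) with hZdef
    set t : ℕ := Z.card with htdef
    have hZsub : Z ⊆ e := filter_subset _ _
    have htpos : 0 < t := card_pos.2 ⟨u2, mem_filter.2 ⟨hu2e, hu2z⟩⟩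
    have htlt : t < m := by
      have hZne : Z ≠ e := by
        intro h
        have : u1 ∈ Z := by rw [h]; exact hu1e
        exact hu1 ((mem_filter.1 this).2)
      rw [htdef, ← hunif e heE]
      exact card_lt_card (hZsub.ssubset_of_ne hZne)
    set c : ℝ := ∏ u ∈ e \ Z, x₀ u with hcdef
    have hcpos : 0 < c := by
      refine prod_pos fun u hu => ?_
      obtain ⟨hue, huZ⟩ := mem_sdiff.1 hu
      have : x₀ u ≠ 0 := fun h => huZ (mem_filter.2 ⟨hue, h⟩)
      exact lt_of_le_of_ne (hx₀0 u) (Ne.symm this)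
    set f₀ : ℝ := hypF E x₀ with hf₀def
    have hf₀0 : 0 ≤ f₀ := sum_nonneg fun e _ => prod_nonneg fun u _ => hx₀0 u
    have hft0 : (0:ℝ) ≤ f₀ * ↑t := mul_nonneg hf₀0 (Nat.cast_nonneg t)
    have hd : (0:ℝ) < f₀ * ↑t + 1 := by linarith
    set ε : ℝ := min 1 (c / (f₀ * t + 1)) with hεdef
    have hεpos : 0 < ε := lt_min one_pos (div_pos hcpos hd)
    have hε1 : ε ≤ 1 := min_le_left _ _
    set y : V → ℝ := fun v => x₀ v + if v ∈ Z then ε else 0 with hydef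
    have hy0 : ∀ v, 0 ≤ y v := fun v =>
      add_nonneg (hx₀0 v) (by split_ifs; exacts [hεpos.le, le_refl 0])
    have hysum : ∑ v, y v ^ m = 1 + t * ε ^ m := by
      have h : ∀ v, y v ^ m = x₀ v ^ m + if v ∈ Z then ε ^ m else 0 := by
        intro v
        rw [hydef]
        simp only []
        split_ifs with hvZ
        · rw [(mem_filter.1 hvZ).2]; simp [zero_pow hmn0]
        · simp
      rw [Finset.sum_congr rfl fun v _ => h v, Finset.sum_add_distrib, hx₀1,
        Finset.sum_ite_mem, Finset.univ_inter, Finset.sum_const, nsmul_eq_mul]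
    have hxley : ∀ v, x₀ v ≤ y v := fun v =>
      le_add_of_nonneg_right (by split_ifs; exacts [hεpos.le, le_refl 0])
    have hprodmono : ∀ e' ∈ E, ∏ u ∈ e', x₀ u ≤ ∏ u ∈ e', y u := fun e' _ =>
      prod_le_prod (fun u _ => hx₀0 u) (fun u _ => hxley u)
    have hey : ∏ u ∈ e, y u = c * ε ^ t := by
      rw [← Finset.prod_sdiff hZsub]
      have h1 : ∏ u ∈ e \ Z, y u = c := by
        refine prod_congr rfl fun u hu => ?_
        rw [hydef]; simp only []
        rw [if_neg (mem_sdiff.1 hu).2, add_zero]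
      have h2 : ∏ u ∈ Z, y u = ε ^ t := by
        have : ∀ u ∈ Z, y u = ε := by
          intro u hu
          rw [hydef]; simp only []
          rw [if_pos hu, (mem_filter.1 hu).2, zero_add]
        rw [prod_congr rfl this, prod_const, htdef]
      rw [h1, h2]
    have hfy : f₀ + c * ε ^ t ≤ hypF E y := by
      have h1 : ∏ u ∈ e, x₀ u = 0 := prod_eq_zero hu2e hu2z
      have hf₀eq : f₀ = ∑ e' ∈ E.erase e, ∏ u ∈ e', x₀ u := by
        rw [hf₀def, hypF, ← Finset.add_sum_erase E _ heE, h1, zero_add]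
      have hyeq : hypF E y = (∏ u ∈ e, y u) + ∑ e' ∈ E.erase e, ∏ u ∈ e', y u := by
        rw [hypF, ← Finset.add_sum_erase E _ heE]
      have h2 : ∑ e' ∈ E.erase e, ∏ u ∈ e', x₀ u ≤ ∑ e' ∈ E.erase e, ∏ u ∈ e', y u :=
        sum_le_sum fun e' he' => hprodmono e' (mem_of_mem_erase he')
      rw [hf₀eq, hyeq, hey]
      linarith
    have hb := hbound y hy0
    rw [hysum] at hb
    have key : (m : ℝ) * (f₀ + c * ε ^ t) ≤ ((m : ℝ) * f₀) * (1 + t * ε ^ m) :=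
      le_trans (mul_le_mul_of_nonneg_left hfy (by positivity)) hb
    have h3' : (m : ℝ) * (c * ε ^ t) ≤ (m : ℝ) * (f₀ * t * ε ^ m) := by nlinarith [key]
    have h3 : c * ε ^ t ≤ f₀ * t * ε ^ m := le_of_mul_le_mul_left h3' hmpos
    have hεt : 0 < ε ^ t := pow_pos hεpos t
    have hA : c ≤ f₀ * t * ε := by
      have hchain : ε ^ t * c ≤ ε ^ t * (f₀ * t * ε) := by
        calc ε ^ t * c = c * ε ^ t := mul_comm _ _
          _ ≤ f₀ * t * ε ^ m := h3
          _ = f₀ * t * (ε ^ t * ε ^ (m - t)) := by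
              rw [← pow_add, Nat.add_sub_cancel' htlt.le]
          _ ≤ f₀ * t * (ε ^ t * ε) := by
              have hεmt : ε ^ (m - t) ≤ ε := by
                have := pow_le_pow_of_le_one hεpos.le hε1 (show 1 ≤ m - t by omega)
                simpa using this
              have h5 := mul_le_mul_of_nonneg_left hεmt hεt.le
              exact mul_le_mul_of_nonneg_left h5 hft0
          _ = ε ^ t * (f₀ * t * ε) := by ring
      exact le_of_mul_le_mul_left hchain hεt
    have hε2 : ε ≤ c / (f₀ * t + 1) := min_le_right _ _
    have hB2 : f₀ * t * ε ≤ f₀ * t * (c / (f₀ * t + 1)) :=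
      mul_le_mul_of_nonneg_left hε2 hft0
    have hC : f₀ * t * (c / (f₀ * t + 1)) < c := by
      have h2 : (f₀ * ↑t) / (f₀ * ↑t + 1) < 1 := (div_lt_one hd).mpr (by linarith)
      calc f₀ * ↑t * (c / (f₀ * ↑t + 1)) = c * ((f₀ * ↑t) / (f₀ * ↑t + 1)) := by ring
        _ < c * 1 := mul_lt_mul_of_pos_left h2 hcpos
        _ = c := mul_one c
    linarith
  -- Lagrange multipliers
  set P : (V → ℝ) → ℝ := fun x => ∑ v, x v ^ m with hPdef
  set Fd : (V → ℝ) →L[ℝ] ℝ :=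
    ∑ v : V, ((m : ℝ) * x₀ v ^ (m - 1)) • (ContinuousLinearMap.proj v : (V → ℝ) →L[ℝ] ℝ)
    with hFddef
  set Gd : (V → ℝ) →L[ℝ] ℝ :=
    (m : ℝ) • ∑ e ∈ E, ∑ u ∈ e,
      (∏ j ∈ e.erase u, x₀ j) • (ContinuousLinearMap.proj u : (V → ℝ) →L[ℝ] ℝ) with hGddef
  have hP' : HasStrictFDerivAt P Fd x₀ := by
    rw [hPdef, hFddef]
    exact HasStrictFDerivAt.fun_sum fun v _ =>
      (hasStrictDerivAt_pow m (x₀ v)).comp_hasStrictFDerivAt x₀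
        ((ContinuousLinearMap.proj v : (V → ℝ) →L[ℝ] ℝ).hasStrictFDerivAt)
  have hG' : HasStrictFDerivAt (fun x : V → ℝ => (m : ℝ) * hypF E x) Gd x₀ := by
    rw [hGddef]
    have h1 : HasStrictFDerivAt (fun x : V → ℝ => hypF E x)
        (∑ e ∈ E, ∑ u ∈ e,
          (∏ j ∈ e.erase u, x₀ j) • (ContinuousLinearMap.proj u : (V → ℝ) →L[ℝ] ℝ)) x₀ :=
      HasStrictFDerivAt.fun_sum fun e _ =>
        HasStrictFDerivAt.finset_prod fun u _ =>
          (ContinuousLinearMap.proj u : (V → ℝ) →L[ℝ] ℝ).hasStrictFDerivAt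
    exact h1.const_mul (m : ℝ)
  have hU : IsOpen {x : V → ℝ | ∀ v, 0 < x v} := by
    have h : {x : V → ℝ | ∀ v, 0 < x v} = ⋂ v, {x : V → ℝ | 0 < x v} := by
      ext x; simp [Set.mem_iInter]
    rw [h]
    exact isOpen_iInter_of_finite fun v => isOpen_lt continuous_const (continuous_apply v)
  have hextr : IsLocalExtrOn (fun x : V → ℝ => (m : ℝ) * hypF E x) {x | P x = P x₀} x₀ := by
    refine Or.inr ?_
    have h1 : ∀ᶠ y in nhdsWithin x₀ {x | P x = P x₀}, ∀ v, 0 < y v :=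
      Filter.eventually_of_mem (mem_nhdsWithin_of_mem_nhds (hU.mem_nhds hpos)) fun y hy => hy
    have h2 : ∀ᶠ y in nhdsWithin x₀ {x | P x = P x₀}, P y = P x₀ :=
      Filter.eventually_of_mem self_mem_nhdsWithin fun y hy => hy
    filter_upwards [h1, h2] with y hy1 hy2
    exact hx₀max (show y ∈ S from ⟨fun v => (hy1 v).le, hy2.trans hx₀1⟩)
  obtain ⟨a, b, hab, heq⟩ := hextr.exists_multipliers_of_hasStrictFDerivAt_1d hP' hG'
  have hFdapp : ∀ w, Fd (Pi.single w (1:ℝ) : V → ℝ) = (m : ℝ) * x₀ w ^ (m - 1) := by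
    intro w
    rw [hFddef, ContinuousLinearMap.sum_apply]
    rw [Finset.sum_eq_single w ?h1 ?h2]
    · rw [ContinuousLinearMap.smul_apply, ContinuousLinearMap.proj_apply, Pi.single_eq_same,
        smul_eq_mul, mul_one]
    case h1 =>
      intro v _ hvw
      rw [ContinuousLinearMap.smul_apply, ContinuousLinearMap.proj_apply,
        Pi.single_eq_of_ne hvw, smul_zero]
    case h2 =>
      intro h; exact absurd (mem_univ w) h
  have hGdapp : ∀ w, Gd (Pi.single w (1:ℝ) : V → ℝ) = (m : ℝ) * AwF E x₀ w := by
    intro w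
    rw [hGddef]
    simp only [ContinuousLinearMap.smul_apply, ContinuousLinearMap.sum_apply,
      ContinuousLinearMap.proj_apply, smul_eq_mul]
    congr 1
    rw [AwF, sum_filter]
    refine sum_congr rfl fun e _ => ?_
    calc ∑ u ∈ e, (∏ j ∈ e.erase u, x₀ j) * (Pi.single w (1:ℝ) : V → ℝ) u
        = ∑ u ∈ e, if u = w then ∏ j ∈ e.erase u, x₀ j else 0 := by
          refine sum_congr rfl fun u _ => ?_
          rw [Pi.single_apply]
          split_ifs <;> simp
      _ = if w ∈ e then ∏ j ∈ e.erase w, x₀ j else 0 := Finset.sum_ite_eq' e w _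
  have heval : ∀ w, a * ((m : ℝ) * x₀ w ^ (m - 1)) + b * ((m : ℝ) * AwF E x₀ w) = 0 := by
    intro w
    have h0 := DFunLike.congr_fun heq (Pi.single w (1:ℝ) : V → ℝ)
    rw [ContinuousLinearMap.add_apply, ContinuousLinearMap.smul_apply,
      ContinuousLinearMap.smul_apply, ContinuousLinearMap.zero_apply, hFdapp w, hGdapp w,
      smul_eq_mul, smul_eq_mul] at h0
    exact h0
  have hbne : b ≠ 0 := by
    intro hb0
    subst hb0
    have ha : a ≠ 0 := fun h => hab (by rw [h]; rfl)
    have h := heval (Classical.arbitrary V)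
    rw [zero_mul, add_zero] at h
    rcases mul_eq_zero.1 h with h | h
    · exact ha h
    · have hxp : (0:ℝ) < (m : ℝ) * x₀ (Classical.arbitrary V) ^ (m - 1) := by
        have := hpos (Classical.arbitrary V)
        positivity
      exact absurd h hxp.ne'
  refine ⟨ρ, hρ0, hbound, x₀, ?_, ?_⟩
  · intro h
    have h1 := hpos (Classical.arbitrary V)
    rw [h] at h1
    simp at h1
  · have hAweq : ∀ v, AwF E x₀ v = (-a / b) * x₀ v ^ (m - 1) := by
      intro v
      have h := heval v
      have h3 : (m : ℝ) * (a * x₀ v ^ (m - 1) + b * AwF E x₀ v) = 0 := by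
        linear_combination h
      have h4 : a * x₀ v ^ (m - 1) + b * AwF E x₀ v = 0 := by
        rcases mul_eq_zero.1 h3 with h5 | h5
        · exact absurd h5 hm0
        · exact h5
      rw [div_mul_eq_mul_div, eq_div_iff hbne]
      linear_combination h4
    have hlam : (-a / b) = ρ := by
      have hsum := pairing_eq E hunif x₀
      have h6 : ∀ v, x₀ v * AwF E x₀ v = (-a / b) * x₀ v ^ m := by
        intro v
        rw [hAweq v]
        have hm1 : m - 1 + 1 = m := by omega
        calc x₀ v * ((-a / b) * x₀ v ^ (m - 1))
            = (-a / b) * (x₀ v ^ (m - 1) * x₀ v) := by ring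
          _ = (-a / b) * x₀ v ^ m := by rw [← pow_succ, hm1]
      rw [Finset.sum_congr rfl fun v _ => h6 v, ← mul_sum, hx₀1, mul_one] at hsum
      rw [hρdef]
      exact hsum
    intro v
    rw [hAweq v, hlam]



theorem sum_derived {M : Type*} [AddCommMonoid M] (hm : 2 ≤ m) (E : Finset (Finset V))
    (hunif : ∀ e ∈ E, e.card = m) (φ : V → Finset V → Equiv.Perm (Fin k))
    (v : V) (j : Fin k) (t : Finset (V × Fin k) → M) :
    ∑ F ∈ (derivedEdges E φ).filter (fun F => (v, j) ∈ F), t F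
      = ∑ e ∈ E.filter (fun e => v ∈ e),
          t (e.image fun u => (u, φ u e ((φ v e).symm j))) := by
  classical
  rw [derivedEdges, Finset.filter_image]
  rw [Finset.sum_image (fun p hp q hq hpsi => ?hinj)]
  case hinj =>
    obtain ⟨e, i⟩ := p
    obtain ⟨e', i'⟩ := q
    simp only [mem_coe, mem_filter, mem_product] at hp hq
    have key : ∀ (E0 : Finset V) (i0 : Fin k),
        (E0.image fun u => (u, φ u E0 i0)).image Prod.fst = E0 := by
      intro E0 i0; ext a; simp
    have he : e = e' := by rw [← key e i, hpsi, key e' i']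
    subst he
    obtain ⟨u, hu⟩ : e.Nonempty := card_pos.1 (by rw [hunif e hp.1.1]; omega)
    have hmem : (u, φ u e i) ∈ e.image (fun u => (u, φ u e i')) := by
      rw [← hpsi]; exact mem_image_of_mem _ hu
    obtain ⟨u2, hu2, heq2⟩ := Finset.mem_image.1 hmem
    have h1 : u2 = u := congrArg Prod.fst heq2
    subst h1
    have h2 : φ u2 e i' = φ u2 e i := congrArg Prod.snd heq2
    exact congrArg (Prod.mk e) ((Equiv.injective _) h2).symm
  have hcond : ∀ p : Finset V × Fin k,
      ((v, j) ∈ p.1.image fun u => (u, φ u p.1 p.2)) ↔ (v ∈ p.1 ∧ φ v p.1 p.2 = j) := by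
    intro p; rw [Finset.mem_image]
    constructor
    · rintro ⟨u, hu, heq⟩
      have h1 : u = v := congrArg Prod.fst heq
      subst h1
      exact ⟨hu, congrArg Prod.snd heq⟩
    · rintro ⟨hv, hj⟩; exact ⟨v, hv, by rw [hj]⟩
  have hset : ((E ×ˢ (univ : Finset (Fin k))).filter
        (fun p => (v, j) ∈ p.1.image fun u => (u, φ u p.1 p.2)))
      = (E.filter fun e => v ∈ e).image (fun e => (e, (φ v e).symm j)) := by
    ext ⟨e, i⟩
    simp only [mem_filter, mem_product, mem_univ, and_true, hcond, mem_image]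
    constructor
    · rintro ⟨hE, hv, hj⟩
      exact ⟨e, ⟨hE, hv⟩, by rw [← hj, Equiv.symm_apply_apply]⟩
    · rintro ⟨e', he', heq⟩
      have h1 : e' = e := congrArg Prod.fst heq
      subst h1
      obtain ⟨hE, hv⟩ := he'
      have h2 : (φ v e').symm j = i := congrArg Prod.snd heq
      exact ⟨hE, hv, by rw [← h2, Equiv.apply_symm_apply]⟩
  rw [hset, Finset.sum_image (fun e1 _ e2 _ h12 => congrArg Prod.fst h12)]

theorem erase_image_prod {M : Type*} [CommMonoid M] (φ : V → Finset V → Equiv.Perm (Fin k))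
    (e : Finset V) (v : V) (hv : v ∈ e) (i : Fin k) (h : V × Fin k → M) :
    ∏ u ∈ (e.image fun u => (u, φ u e i)).erase (v, φ v e i), h u
      = ∏ u ∈ e.erase v, h (u, φ u e i) := by
  have hinj : Function.Injective (fun u => (u, φ u e i) : V → V × Fin k) :=
    fun a b hab => congrArg Prod.fst hab
  rw [show ((v, φ v e i) : V × Fin k) = (fun u => (u, φ u e i)) v from rfl,
    ← Finset.image_erase hinj e v,
    Finset.prod_image (fun a _ b _ hab => hinj hab)]

theorem lift_eig (hm : 2 ≤ m) (hk : 0 < k) (E : Finset (Finset V))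
    (hunif : ∀ e ∈ E, e.card = m) (φ : V → Finset V → Equiv.Perm (Fin k)) {lam : ℂ}
    (h : IsHypEigenvalue m E lam) : IsHypEigenvalue m (derivedEdges E φ) lam := by
  obtain ⟨x, hx0, hx⟩ := h
  refine ⟨fun w => x w.1, ?_, ?_⟩
  · obtain ⟨v, hv⟩ := Function.ne_iff.1 hx0
    exact Function.ne_iff.2 ⟨(v, ⟨0, hk⟩), hv⟩
  · rintro ⟨v, j⟩
    rw [sum_derived hm E hunif φ v j (fun F => ∏ u ∈ F.erase (v, j), x u.1)]
    have hterm : ∀ e ∈ E.filter (fun e => v ∈ e),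
        (∏ u ∈ (e.image fun u => (u, φ u e ((φ v e).symm j))).erase (v, j), x u.1)
          = ∏ u ∈ e.erase v, x u := by
      intro e he
      obtain ⟨heE, hve⟩ := mem_filter.1 he
      set i := (φ v e).symm j with hi
      have hj : φ v e i = j := Equiv.apply_symm_apply _ _
      rw [← hj, erase_image_prod φ e v hve i]
    rw [sum_congr rfl hterm]
    exact hx v

theorem real_eig_complex (E : Finset (Finset V)) {ρ : ℝ} {xr : V → ℝ} (hxr : xr ≠ 0)
    (h : ∀ v, AwF E xr v = ρ * xr v ^ (m - 1)) : IsHypEigenvalue m E (ρ : ℂ) := by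
  refine ⟨fun v => (xr v : ℂ), ?_, ?_⟩
  · intro hz
    apply hxr
    funext v
    simpa using congrFun hz v
  · intro v
    have hcast : ∑ f ∈ E.filter (fun f => v ∈ f), ∏ u ∈ f.erase v, ((xr u : ℂ))
        = ((AwF E xr v : ℝ) : ℂ) := by
      rw [AwF]
      push_cast
      rfl
    rw [hcast, h v]
    push_cast
    ring

theorem abs_le_of_eig (hm : 2 ≤ m) (E : Finset (Finset V)) (hunif : ∀ e ∈ E, e.card = m)
    {ρ : ℝ} (hbound : ∀ x : V → ℝ, (∀ v, 0 ≤ x v) → (m : ℝ) * hypF E x ≤ ρ * ∑ v, x v ^ m)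
    {lam : ℂ} (h : IsHypEigenvalue m E lam) : ‖lam‖ ≤ ρ := by
  obtain ⟨x, hx0, hx⟩ := h
  have ha0 : ∀ v, 0 ≤ ‖x v‖ := fun v => norm_nonneg _
  have hineq : ∀ v, ‖lam‖ * ‖x v‖ ^ (m - 1)
      ≤ AwF E (fun u => ‖x u‖) v := by
    intro v
    have h1 := congrArg norm (hx v)
    rw [norm_mul, norm_pow] at h1
    rw [← h1]
    calc ‖∑ f ∈ E.filter (fun f => v ∈ f), ∏ u ∈ f.erase v, x u‖
        ≤ ∑ f ∈ E.filter (fun f => v ∈ f), ‖∏ u ∈ f.erase v, x u‖ :=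
          norm_sum_le _ _
      _ = AwF E (fun u => ‖x u‖) v :=
          sum_congr rfl fun f _ => norm_prod _ _
  have hple := pairing_le (by omega) E hunif ha0 hineq
  have hb := hbound (fun u => ‖x u‖) ha0
  have hs : 0 < ∑ v, ‖x v‖ ^ m := by
    obtain ⟨v, hv⟩ := Function.ne_iff.1 hx0
    refine sum_pos' (fun u _ => pow_nonneg (ha0 u) m) ⟨v, mem_univ v, ?_⟩
    have hpos : 0 < ‖x v‖ := norm_pos_iff.mpr hv
    positivity
  exact le_of_mul_le_mul_right (hple.trans hb) hs

theorem cover_abs_le (hm : 2 ≤ m) (hk : 0 < k) (E : Finset (Finset V))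
    (hunif : ∀ e ∈ E, e.card = m) (φ : V → Finset V → Equiv.Perm (Fin k))
    {ρ : ℝ} (hbound : ∀ x : V → ℝ, (∀ v, 0 ≤ x v) → (m : ℝ) * hypF E x ≤ ρ * ∑ v, x v ^ m)
    {lam : ℂ} (h : IsHypEigenvalue m (derivedEdges E φ) lam) : ‖lam‖ ≤ ρ := by
  obtain ⟨y, hy0, hy⟩ := h
  haveI : Nonempty (Fin k) := ⟨⟨0, hk⟩⟩
  have hargmax : ∀ v : V, ∃ j0 : Fin k,
      ∀ j : Fin k, ‖y (v, j)‖ ≤ ‖y (v, j0)‖ := by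
    intro v
    obtain ⟨j0, _, hj0⟩ :=
      Finset.exists_max_image univ (fun j => ‖y (v, j)‖) univ_nonempty
    exact ⟨j0, fun j => hj0 j (mem_univ j)⟩
  choose jf hjf using hargmax
  have hx0 : ∀ v, 0 ≤ ‖y (v, jf v)‖ := fun v => norm_nonneg _
  have hineq : ∀ v, ‖lam‖ * ‖y (v, jf v)‖ ^ (m - 1)
      ≤ AwF E (fun u => ‖y (u, jf u)‖) v := by
    intro v
    have h1 := congrArg norm (hy (v, jf v))
    rw [norm_mul, norm_pow] at h1
    rw [← h1]
    calc ‖∑ F ∈ (derivedEdges E φ).filter (fun F => (v, jf v) ∈ F),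
            ∏ u ∈ F.erase (v, jf v), y u‖
        ≤ ∑ F ∈ (derivedEdges E φ).filter (fun F => (v, jf v) ∈ F),
            ‖∏ u ∈ F.erase (v, jf v), y u‖ := norm_sum_le _ _
      _ = ∑ F ∈ (derivedEdges E φ).filter (fun F => (v, jf v) ∈ F),
            ∏ u ∈ F.erase (v, jf v), ‖y u‖ :=
          sum_congr rfl fun F _ => norm_prod _ _
      _ = ∑ e ∈ E.filter (fun e => v ∈ e),
            ∏ u ∈ ((e.image fun u => (u, φ u e ((φ v e).symm (jf v)))).erase (v, jf v)),
              ‖y u‖ :=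
          sum_derived hm E hunif φ v (jf v) _
      _ = ∑ e ∈ E.filter (fun e => v ∈ e),
            ∏ u ∈ e.erase v, ‖y (u, φ u e ((φ v e).symm (jf v)))‖ := by
          refine sum_congr rfl fun e he => ?_
          obtain ⟨heE, hve⟩ := mem_filter.1 he
          set i := (φ v e).symm (jf v) with hi
          have hj : φ v e i = jf v := Equiv.apply_symm_apply _ _
          rw [← hj, erase_image_prod φ e v hve i]
      _ ≤ ∑ e ∈ E.filter (fun e => v ∈ e),
            ∏ u ∈ e.erase v, ‖y (u, jf u)‖ :=
          sum_le_sum fun e _ => prod_le_prod (fun u _ => norm_nonneg _)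
            (fun u _ => hjf u _)
      _ = AwF E (fun u => ‖y (u, jf u)‖) v := rfl
  have hple := pairing_le (by omega) E hunif hx0 hineq
  have hb := hbound (fun u => ‖y (u, jf u)‖) hx0
  have hs : 0 < ∑ v, ‖y (v, jf v)‖ ^ m := by
    obtain ⟨⟨v0, j0⟩, hw⟩ := Function.ne_iff.1 hy0
    refine sum_pos' (fun u _ => pow_nonneg (hx0 u) m) ⟨v0, mem_univ v0, ?_⟩
    have hpos : 0 < ‖y (v0, j0)‖ := norm_pos_iff.mpr hw
    have hle := hjf v0 j0
    have : 0 < ‖y (v0, jf v0)‖ := lt_of_lt_of_le hpos hle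
    positivity
  exact le_of_mul_le_mul_right (hple.trans hb) hs


end Stmt12T

theorem stmt_12 {V : Type*} [Fintype V] [DecidableEq V] {m k : ℕ} (hm : 2 ≤ m) (hk : 0 < k)
    (E : Finset (Finset V)) (hunif : ∀ e ∈ E, e.card = m)
    (hconn : (hypAdj E).Connected)
    (φ : V → Finset V → Equiv.Perm (Fin k)) :
    sSup {r : ℝ | ∃ lam : ℂ, IsHypEigenvalue m (derivedEdges E φ) lam ∧ ‖lam‖ = r}
      = sSup {r : ℝ | ∃ lam : ℂ, IsHypEigenvalue m E lam ∧ ‖lam‖ = r} := by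
  classical
  haveI : Nonempty V := hconn.nonempty
  obtain ⟨ρ, hρ0, hbound, xr, hxr0, hxreig⟩ := Stmt12T.pf hm E hunif hconn
  have hρB : IsHypEigenvalue m E (ρ : ℂ) := Stmt12T.real_eig_complex E hxr0 hxreig
  have hρA : IsHypEigenvalue m (derivedEdges E φ) (ρ : ℂ) :=
    Stmt12T.lift_eig hm hk E hunif φ hρB
  have habsρ : ‖(ρ : ℂ)‖ = ρ := by
    rw [Complex.norm_real, Real.norm_eq_abs, abs_of_nonneg hρ0]
  have hGB : IsGreatest {r : ℝ | ∃ lam : ℂ, IsHypEigenvalue m E lam ∧ ‖lam‖ = r} ρ := by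
    constructor
    · exact ⟨(ρ : ℂ), hρB, habsρ⟩
    · rintro r ⟨lam, hl, rfl⟩
      exact Stmt12T.abs_le_of_eig hm E hunif hbound hl
  have hGA : IsGreatest
      {r : ℝ | ∃ lam : ℂ, IsHypEigenvalue m (derivedEdges E φ) lam ∧ ‖lam‖ = r} ρ := by
    constructor
    · exact ⟨(ρ : ℂ), hρA, habsρ⟩
    · rintro r ⟨lam, hl, rfl⟩
      exact Stmt12T.cover_abs_le hm hk E hunif φ hbound hl
  rw [hGA.csSup_eq, hGB.csSup_eq]
end

section
/- Let m be even, let H be a connected m-uniform hypergraph on a finite vertex set V with edge set E, and let H_B^φ be the 2-fold covering of H derived from a permutation voltage assignment φ in S_2 on the incidence graph B_H. Then every eigenvalue of the signed hypergraph Γ(H,φ) is an eigenvalue of H_B^φ: if λ ∈ ℂ admits a nonzero x : V → ℂ with Σ_{e ∈ E, v ∈ e} sgn(e)·Π_{u ∈ e∖{v}} x(u) = λ·x(v)^{m−1} for all v ∈ V, then the vector y : V × {1,2} → ℂ defined by y(v,1) = x(v) and y(v,2) = −x(v) is a nonzero vector satisfying the eigenvalue equations for H_B^φ with the same λ. -/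
open SimpleGraph Finset

/-- The sign of a permutation in `S_2`: `1` for the identity, `-1` for the transposition. -/
noncomputable def sgnC (σ : Equiv.Perm (Fin 2)) : ℂ := if σ = 1 then 1 else -1

/-- Helper sign function on `Fin 2`. -/
noncomputable def cSgn (j : Fin 2) : ℂ := if j = 0 then 1 else -1

lemma perm2_cases (σ : Equiv.Perm (Fin 2)) : σ = 1 ∨ σ = Equiv.swap 0 1 := by
  revert σ; decide

lemma cSgn_apply (σ τ : Equiv.Perm (Fin 2)) (j : Fin 2) :
    cSgn (σ j) = sgnC σ * sgnC τ * cSgn (τ j) := by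
  rcases perm2_cases σ with rfl | rfl <;> rcases perm2_cases τ with rfl | rfl <;>
    fin_cases j <;>
      simp [cSgn, sgnC, Equiv.swap_apply_left, Equiv.swap_apply_right,
        show Equiv.swap (0 : Fin 2) 1 ≠ 1 by decide]

lemma sgnC_mul_self (σ : Equiv.Perm (Fin 2)) : sgnC σ * sgnC σ = 1 := by
  unfold sgnC; split <;> ring

lemma sgnC_pow_even (σ : Equiv.Perm (Fin 2)) {m : ℕ} (hm : Even m) : sgnC σ ^ m = 1 := by
  unfold sgnC; split
  · simp
  · exact hm.neg_one_pow

theorem stmt_13 {V : Type*} [Fintype V] [DecidableEq V] {m : ℕ}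
    (hm : 2 ≤ m) (hmeven : Even m)
    (E : Finset (Finset V)) (hunif : ∀ e ∈ E, e.card = m)
    (hconn : (hypAdj E).Connected)
    (φ : V → Finset V → Equiv.Perm (Fin 2))
    (lam : ℂ) (x : V → ℂ) (hx : x ≠ 0)
    (heig : ∀ v : V,
      ∑ e ∈ E.filter (fun e => v ∈ e),
          (∏ u ∈ e, sgnC (φ u e)) * ∏ u ∈ e.erase v, x u = lam * x v ^ (m - 1)) :
    (fun p : V × Fin 2 => if p.2 = 0 then x p.1 else -x p.1) ≠ 0 ∧
      ∀ p : V × Fin 2,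
        ∑ f ∈ (derivedEdges E φ).filter (fun f => p ∈ f),
            ∏ u ∈ f.erase p, (fun q : V × Fin 2 => if q.2 = 0 then x q.1 else -x q.1) u
          = lam * (fun q : V × Fin 2 => if q.2 = 0 then x q.1 else -x q.1) p ^ (m - 1) := by
  have hy : ∀ p : V × Fin 2, (if p.2 = 0 then x p.1 else -x p.1) = cSgn p.2 * x p.1 := by
    intro p; unfold cSgn; split <;> ring
  constructor
  · intro h
    apply hx
    funext v
    have := congrFun h (v, 0)
    simpa using this
  intro p
  obtain ⟨v, j0⟩ := p
  simp only [hy]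
  -- the map defining derived edges
  set F : Finset V × Fin 2 → Finset (V × Fin 2) :=
    fun q => q.1.image (fun u => (u, φ u q.1 q.2)) with hF
  -- injectivity of F on E ×ˢ univ
  have hinj : ∀ q1 ∈ (E ×ˢ (Finset.univ : Finset (Fin 2))), ∀ q2 ∈ (E ×ˢ (Finset.univ : Finset (Fin 2))),
      F q1 = F q2 → q1 = q2 := by
    rintro ⟨e1, j1⟩ hq1 ⟨e2, j2⟩ hq2 heq
    simp only [Finset.mem_product] at hq1 hq2
    have he : e1 = e2 := by
      have h1 : (F (e1, j1)).image Prod.fst = e1 := by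
        ext a; simp [hF]
      have h2 : (F (e2, j2)).image Prod.fst = e2 := by
        ext a; simp [hF]
      rw [← h1, ← h2, heq]
    subst he
    have hne : e1.Nonempty := by
      rw [← Finset.card_pos, hunif e1 hq1.1]; omega
    obtain ⟨u0, hu0⟩ := hne
    have : (u0, φ u0 e1 j1) ∈ F (e1, j2) := by
      rw [← heq]; exact Finset.mem_image_of_mem _ hu0
    simp only [hF, Finset.mem_image] at this
    obtain ⟨u, hu, huv⟩ := this
    have h1 : u = u0 := (Prod.mk.injEq _ _ _ _).mp huv |>.1
    subst h1
    have h2 : φ u e1 j2 = φ u e1 j1 := (Prod.mk.injEq _ _ _ _).mp huv |>.2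
    have : j2 = j1 := (φ u e1).injective h2
    simp [this]
  -- rewrite the filtered sum over derived edges as a sum over pairs
  rw [derivedEdges, ← hF, Finset.filter_image, Finset.sum_image (by
    intro q1 hq1 q2 hq2 h
    exact hinj q1 (Finset.mem_filter.mp hq1).1 q2 (Finset.mem_filter.mp hq2).1 h)]
  -- identify the filter condition
  have hcond : ∀ q : Finset V × Fin 2, q ∈ E ×ˢ (Finset.univ : Finset (Fin 2)) →
      (((v, j0) ∈ F q) ↔ (v ∈ q.1 ∧ φ v q.1 q.2 = j0)) := by
    rintro ⟨e, j⟩ _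
    simp only [hF, Finset.mem_image]
    constructor
    · rintro ⟨u, hu, huv⟩
      obtain ⟨h1, h2⟩ := (Prod.mk.injEq _ _ _ _).mp huv
      subst h1; exact ⟨hu, h2⟩
    · rintro ⟨h1, h2⟩
      exact ⟨v, h1, by rw [h2]⟩
  rw [Finset.filter_congr hcond]
  -- per-term computation
  have hterm : ∀ q ∈ (E ×ˢ (Finset.univ : Finset (Fin 2))).filter
      (fun q => v ∈ q.1 ∧ φ v q.1 q.2 = j0),
      (∏ u ∈ (F q).erase (v, j0), cSgn u.2 * x u.1)
        = cSgn j0 ^ (m - 1) * ((∏ u ∈ q.1, sgnC (φ u q.1)) * ∏ u ∈ q.1.erase v, x u) := by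
    rintro ⟨e, j⟩ hq
    simp only [Finset.mem_filter, Finset.mem_product] at hq
    obtain ⟨⟨heE, -⟩, hve, hφv⟩ := hq
    have hginj : Function.Injective (fun u : V => (u, φ u e j)) := by
      intro a b hab
      exact ((Prod.mk.injEq _ _ _ _).mp hab).1
    have herase : (F (e, j)).erase (v, j0) = (e.erase v).image (fun u => (u, φ u e j)) := by
      rw [hF]
      have : ((v : V), j0) = (fun u : V => (u, φ u e j)) v := by simp [hφv]
      rw [this, ← Finset.image_erase hginj]
    rw [herase, Finset.prod_image (fun a _ b _ h => hginj h)]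
    -- pointwise sign identity
    have hpt : ∀ u ∈ e.erase v, cSgn ((φ u e) j) * x u
        = (sgnC (φ u e) * (sgnC (φ v e) * cSgn j0)) * x u := by
      intro u _
      rw [cSgn_apply (φ u e) (φ v e) j, hφv]
      ring
    rw [Finset.prod_congr rfl hpt]
    have hcard : (e.erase v).card = m - 1 := by
      rw [Finset.card_erase_of_mem hve, hunif e heE]
    rw [Finset.prod_mul_distrib, Finset.prod_mul_distrib, Finset.prod_const, hcard]
    have hprodsgn : (∏ u ∈ e.erase v, sgnC (φ u e)) = sgnC (φ v e) * ∏ u ∈ e, sgnC (φ u e) := by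
      rw [← Finset.mul_prod_erase e (fun u => sgnC (φ u e)) hve, ← mul_assoc,
        sgnC_mul_self, one_mul]
    rw [hprodsgn, mul_pow]
    have hA : sgnC (φ v e) * sgnC (φ v e) ^ (m - 1) = 1 := by
      have : sgnC (φ v e) * sgnC (φ v e) ^ (m - 1) = sgnC (φ v e) ^ m := by
        rw [← pow_succ']
        congr 1
        omega
      rw [this, sgnC_pow_even _ hmeven]
    calc sgnC (φ v e) * (∏ u ∈ e, sgnC (φ u e)) *
          (sgnC (φ v e) ^ (m - 1) * cSgn j0 ^ (m - 1)) * ∏ u ∈ e.erase v, x u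
        = (sgnC (φ v e) * sgnC (φ v e) ^ (m - 1)) *
            (cSgn j0 ^ (m - 1) * ((∏ u ∈ e, sgnC (φ u e)) * ∏ u ∈ e.erase v, x u)) := by ring
      _ = _ := by rw [hA, one_mul]
  rw [Finset.sum_congr rfl hterm]
  -- reindex the sum over pairs by edges
  have hreindex :
      ∑ q ∈ (E ×ˢ (Finset.univ : Finset (Fin 2))).filter
          (fun q => v ∈ q.1 ∧ φ v q.1 q.2 = j0),
        cSgn j0 ^ (m - 1) * ((∏ u ∈ q.1, sgnC (φ u q.1)) * ∏ u ∈ q.1.erase v, x u)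
      = ∑ e ∈ E.filter (fun e => v ∈ e),
        cSgn j0 ^ (m - 1) * ((∏ u ∈ e, sgnC (φ u e)) * ∏ u ∈ e.erase v, x u) := by
    apply Finset.sum_nbij' (fun q => q.1) (fun e => (e, (φ v e).symm j0))
    · rintro ⟨e, j⟩ hq
      simp only [Finset.mem_filter, Finset.mem_product] at hq ⊢
      exact ⟨hq.1.1, hq.2.1⟩
    · intro e he
      simp only [Finset.mem_filter] at he
      simp only [Finset.mem_filter, Finset.mem_product]
      exact ⟨⟨he.1, Finset.mem_univ _⟩, he.2, by simp⟩
    · rintro ⟨e, j⟩ hq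
      simp only [Finset.mem_filter, Finset.mem_product] at hq
      have : (φ v e).symm j0 = j := by rw [← hq.2.2]; simp
      simp [this]
    · intro e _; rfl
    · rintro ⟨e, j⟩ _; rfl
  rw [hreindex, ← Finset.mul_sum, heig v]
  have hj : (if j0 = (0 : Fin 2) then x v else -x v) = cSgn j0 * x v := by
    unfold cSgn; split <;> ring
  rw [hj, mul_pow]
  ring
end

section
/- Let H be a connected m-uniform hypergraph on a finite vertex set V, and let H_B^φ be a connected k-fold covering of H derived from a permutation voltage assignment φ in S_k on the incidence graph B_H. Then c(H) divides c(H_B^φ), where for a connected m-uniform hypergraph G, c(G) is the greatest positive integer ℓ such that ℓ divides m and there exists x : V(G) → ℤ_m with Σ_{v ∈ e} x(v) = m/ℓ in ℤ_m for every edge e of G. -/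
open SimpleGraph Finset

/-- The cyclic index of an `m`-uniform hypergraph with vertex set `W` and edge set `F`:
the greatest positive integer `ℓ` dividing `m` such that there is `x : W → ℤ_m` with
`∑_{v ∈ e} x v = m/ℓ` in `ℤ_m` for every edge `e`. -/
noncomputable def cycIdx {W : Type*} (m : ℕ) (F : Finset (Finset W)) : ℕ :=
  sSup {ℓ : ℕ | 0 < ℓ ∧ ℓ ∣ m ∧
    ∃ x : W → ZMod m, ∀ e ∈ F, ∑ v ∈ e, x v = ((m / ℓ : ℕ) : ZMod m)}

lemma gcd_div_div {m a b : ℕ} (ha : a ∣ m) (hb : b ∣ m) :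
    Nat.gcd (m / a) (m / b) = m / Nat.lcm a b := by
  have hl : Nat.lcm a b ∣ m := Nat.lcm_dvd ha hb
  apply Nat.dvd_antisymm
  · rw [Nat.dvd_div_iff_mul_dvd hl]
    have h1 : a * Nat.gcd (m / a) (m / b) ∣ m := by
      rw [← Nat.dvd_div_iff_mul_dvd ha]; exact Nat.gcd_dvd_left _ _
    have h2 : b * Nat.gcd (m / a) (m / b) ∣ m := by
      rw [← Nat.dvd_div_iff_mul_dvd hb]; exact Nat.gcd_dvd_right _ _
    have := Nat.lcm_dvd h1 h2
    rwa [Nat.lcm_mul_right] at this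
  · apply Nat.dvd_gcd
    · rw [Nat.dvd_div_iff_mul_dvd ha]
      calc a * (m / Nat.lcm a b) ∣ Nat.lcm a b * (m / Nat.lcm a b) :=
            mul_dvd_mul_right (Nat.dvd_lcm_left a b) _
        _ = m := Nat.mul_div_cancel' hl
    · rw [Nat.dvd_div_iff_mul_dvd hb]
      calc b * (m / Nat.lcm a b) ∣ Nat.lcm a b * (m / Nat.lcm a b) :=
            mul_dvd_mul_right (Nat.dvd_lcm_right a b) _
        _ = m := Nat.mul_div_cancel' hl

/-- The set of valid indices is closed under `lcm`: Bezout argument. -/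
lemma valid_lcm {W : Type*} {m : ℕ} {F : Finset (Finset W)} {a b : ℕ}
    (ha : 0 < a ∧ a ∣ m ∧ ∃ x : W → ZMod m, ∀ e ∈ F, ∑ v ∈ e, x v = ((m / a : ℕ) : ZMod m))
    (hb : 0 < b ∧ b ∣ m ∧ ∃ x : W → ZMod m, ∀ e ∈ F, ∑ v ∈ e, x v = ((m / b : ℕ) : ZMod m)) :
    0 < Nat.lcm a b ∧ Nat.lcm a b ∣ m ∧
      ∃ x : W → ZMod m, ∀ e ∈ F, ∑ v ∈ e, x v = ((m / Nat.lcm a b : ℕ) : ZMod m) := by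
  obtain ⟨ha0, ham, xa, hxa⟩ := ha
  obtain ⟨hb0, hbm, xb, hxb⟩ := hb
  refine ⟨Nat.lcm_pos ha0 hb0, Nat.lcm_dvd ham hbm, ?_⟩
  set p : ℕ := m / a
  set q : ℕ := m / b
  set A : ℤ := Int.gcdA p q
  set B : ℤ := Int.gcdB p q
  have hbez : (Int.gcd (p : ℤ) (q : ℤ) : ℤ) = p * A + q * B := Int.gcd_eq_gcd_ab _ _
  refine ⟨fun v => (A : ZMod m) * xa v + (B : ZMod m) * xb v, fun e he => ?_⟩
  rw [Finset.sum_add_distrib, ← Finset.mul_sum, ← Finset.mul_sum, hxa e he, hxb e he]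
  have key : ((Nat.gcd p q : ℕ) : ZMod m) = (A : ZMod m) * (p : ZMod m) + (B : ZMod m) * (q : ZMod m) := by
    have := congrArg (fun z : ℤ => ((z : ZMod m))) hbez
    rw [Int.gcd_natCast_natCast] at this
    push_cast at this ⊢
    rw [this]; ring
  rw [← gcd_div_div ham hbm, key]

lemma one_valid {W : Type*} {m : ℕ} (F : Finset (Finset W)) :
    0 < 1 ∧ 1 ∣ m ∧ ∃ x : W → ZMod m, ∀ e ∈ F, ∑ v ∈ e, x v = ((m / 1 : ℕ) : ZMod m) := by
  refine ⟨one_pos, one_dvd _, 0, fun e _ => ?_⟩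
  simp [ZMod.natCast_self]

lemma valid_bddAbove {W : Type*} {m : ℕ} (hm : 0 < m) (F : Finset (Finset W)) :
    BddAbove {ℓ : ℕ | 0 < ℓ ∧ ℓ ∣ m ∧
      ∃ x : W → ZMod m, ∀ e ∈ F, ∑ v ∈ e, x v = ((m / ℓ : ℕ) : ZMod m)} :=
  ⟨m, fun _ h => Nat.le_of_dvd hm h.2.1⟩

theorem stmt_14 {V : Type*} [Fintype V] [DecidableEq V] {m k : ℕ} (hm : 2 ≤ m) (hk : 0 < k)
    (E : Finset (Finset V)) (hunif : ∀ e ∈ E, e.card = m)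
    (hconn : (hypAdj E).Connected)
    (φ : V → Finset V → Equiv.Perm (Fin k))
    (hconn' : (hypAdj (derivedEdges E φ)).Connected) :
    cycIdx m E ∣ cycIdx m (derivedEdges E φ) := by
  have hm0 : 0 < m := lt_of_lt_of_le two_pos hm
  set S1 := {ℓ : ℕ | 0 < ℓ ∧ ℓ ∣ m ∧
    ∃ x : V → ZMod m, ∀ e ∈ E, ∑ v ∈ e, x v = ((m / ℓ : ℕ) : ZMod m)} with hS1
  set S2 := {ℓ : ℕ | 0 < ℓ ∧ ℓ ∣ m ∧
    ∃ x : V × Fin k → ZMod m, ∀ e ∈ derivedEdges E φ, ∑ v ∈ e, x v = ((m / ℓ : ℕ) : ZMod m)}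
    with hS2
  have hc1 : cycIdx m E ∈ S1 :=
    Nat.sSup_mem ⟨1, one_valid E⟩ (valid_bddAbove hm0 E)
  have hc2 : cycIdx m (derivedEdges E φ) ∈ S2 :=
    Nat.sSup_mem ⟨1, one_valid _⟩ (valid_bddAbove hm0 _)
  -- pull back the witness for E to the derived hypergraph
  have hc1' : cycIdx m E ∈ S2 := by
    obtain ⟨h0, hdvd, x, hx⟩ := hc1
    refine ⟨h0, hdvd, fun p => x p.1, fun e' he' => ?_⟩
    simp only [derivedEdges, Finset.mem_image, Finset.mem_product] at he'
    obtain ⟨⟨e, j⟩, ⟨heE, -⟩, rfl⟩ := he'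
    rw [Finset.sum_image (fun u _ u' _ h => congrArg Prod.fst h)]
    exact hx e heE
  -- lcm of the two indices is valid for the derived hypergraph
  have hl : Nat.lcm (cycIdx m E) (cycIdx m (derivedEdges E φ)) ∈ S2 := valid_lcm hc1' hc2
  have hle : Nat.lcm (cycIdx m E) (cycIdx m (derivedEdges E φ)) ≤ cycIdx m (derivedEdges E φ) :=
    le_csSup (valid_bddAbove hm0 _) hl
  have hge : cycIdx m (derivedEdges E φ) ≤ Nat.lcm (cycIdx m E) (cycIdx m (derivedEdges E φ)) :=
    Nat.le_of_dvd hl.1 (Nat.dvd_lcm_right _ _)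
  have : Nat.lcm (cycIdx m E) (cycIdx m (derivedEdges E φ)) = cycIdx m (derivedEdges E φ) :=
    le_antisymm hle hge
  calc cycIdx m E ∣ Nat.lcm (cycIdx m E) (cycIdx m (derivedEdges E φ)) := Nat.dvd_lcm_left _ _
    _ = cycIdx m (derivedEdges E φ) := this
end

section
/- Let H be a connected m-uniform hypergraph on a finite vertex set V with edge set E, fix a base vertex v₁ ∈ V, and let H_B^φ be the k-fold covering of H derived from a permutation voltage assignment φ in S_k on the incidence graph B_H. Then the lifting map τ, defined by τ(x)(v,i) = x(v) for x : V → ℤ_m, is an injective ℤ_m-linear map that sends PS₀(H) into PS₀(H_B^φ), where PS₀(H_B^φ) is taken with base vertex (v₁,1); in particular, PS₀(H) embeds as a ℤ_m-submodule of PS₀(H_B^φ). -/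
open SimpleGraph Finset

/-- `PS₀(G)` for an `m`-uniform hypergraph with edge set `F` and base vertex `w₁`:
the set of `x : V(G) → ℤ_m` with `Z(G)x = 0` over `ℤ_m` and `x(w₁) = 0`. -/
def PS0 {W : Type*} (m : ℕ) (F : Finset (Finset W)) (w₁ : W) : Set (W → ZMod m) :=
  {x | (∀ e ∈ F, ∑ v ∈ e, x v = 0) ∧ x w₁ = 0}

theorem stmt_15 {V : Type*} [Fintype V] [DecidableEq V] {m k : ℕ} (hm : 2 ≤ m) (hk : 0 < k)
    (E : Finset (Finset V)) (hunif : ∀ e ∈ E, e.card = m)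
    (hconn : (hypAdj E).Connected) (v₁ : V)
    (φ : V → Finset V → Equiv.Perm (Fin k)) :
    Function.Injective (fun (x : V → ZMod m) (p : V × Fin k) => x p.1) ∧
    IsLinearMap (ZMod m) (fun (x : V → ZMod m) (p : V × Fin k) => x p.1) ∧
    Set.MapsTo (fun (x : V → ZMod m) (p : V × Fin k) => x p.1)
      (PS0 m E v₁) (PS0 m (derivedEdges E φ) (v₁, ⟨0, hk⟩)) := by
  refine ⟨?_, ⟨fun x y => rfl, fun c x => rfl⟩, ?_⟩
  · intro x y h
    funext v
    exact congrFun h (v, ⟨0, hk⟩)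
  · rintro x ⟨hx, hx1⟩
    refine ⟨?_, hx1⟩
    intro f hf
    simp only [derivedEdges, Finset.mem_image, Finset.mem_product] at hf
    obtain ⟨⟨e, j⟩, ⟨he, -⟩, rfl⟩ := hf
    rw [Finset.sum_image (fun a _ b _ hab => (Prod.mk.injEq _ _ _ _ ▸ hab).1)]
    exact hx e he
end

section
/- Let H be a connected m-uniform hypergraph on a finite vertex set V, and let H_B^φ be a connected k-fold covering of H derived from a permutation voltage assignment φ in S_k on the incidence graph B_H. Then s(H) divides s(H_B^φ), i.e., the cardinality of PS₀(H) divides the cardinality of PS₀(H_B^φ). -/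
open SimpleGraph Finset

/-- `PS0` as an additive subgroup. -/
def PS0sub {W : Type*} (m : ℕ) (F : Finset (Finset W)) (w₁ : W) : AddSubgroup (W → ZMod m) where
  carrier := PS0 m F w₁
  zero_mem' := ⟨fun e _ => by simp, rfl⟩
  add_mem' := fun {a b} ha hb =>
    ⟨fun e he => by
      simp only [Pi.add_apply, Finset.sum_add_distrib, ha.1 e he, hb.1 e he, add_zero],
     by simp [ha.2, hb.2]⟩
  neg_mem' := fun {a} ha =>
    ⟨fun e he => by
      simp only [Pi.neg_apply, Finset.sum_neg_distrib, ha.1 e he, neg_zero],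
     by simp [ha.2]⟩

theorem stmt_16 {V : Type*} [Fintype V] [DecidableEq V] {m k : ℕ} (hm : 2 ≤ m) (hk : 0 < k)
    (E : Finset (Finset V)) (hunif : ∀ e ∈ E, e.card = m)
    (hconn : (hypAdj E).Connected) (v₁ : V)
    (φ : V → Finset V → Equiv.Perm (Fin k))
    (hconn' : (hypAdj (derivedEdges E φ)).Connected) :
    Nat.card ↥(PS0 m E v₁) ∣ Nat.card ↥(PS0 m (derivedEdges E φ) (v₁, ⟨0, hk⟩)) := by
  have key : ∀ x : V → ZMod m, x ∈ PS0 m E v₁ →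
      (fun p : V × Fin k => x p.1) ∈ PS0 m (derivedEdges E φ) (v₁, ⟨0, hk⟩) := by
    intro x hx
    refine ⟨?_, hx.2⟩
    intro f hf
    simp only [derivedEdges, Finset.mem_image, Finset.mem_product] at hf
    obtain ⟨⟨e, j⟩, ⟨he, -⟩, rfl⟩ := hf
    rw [Finset.sum_image (fun a _ b _ h => congrArg Prod.fst h)]
    exact hx.1 e he
  let g : PS0sub m E v₁ →+ PS0sub m (derivedEdges E φ) (v₁, ⟨0, hk⟩) :=
    { toFun := fun x => ⟨fun p => x.1 p.1, key x.1 x.2⟩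
      map_zero' := rfl
      map_add' := fun a b => rfl }
  have ginj : Function.Injective g := by
    intro a b h
    apply Subtype.ext
    funext v
    exact congrFun (congrArg Subtype.val h) (v, ⟨0, hk⟩)
  show Nat.card (PS0sub m E v₁) ∣ Nat.card (PS0sub m (derivedEdges E φ) (v₁, ⟨0, hk⟩))
  exact AddSubgroup.card_dvd_of_injective g ginj
end
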